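/- For every chord diagram d, every integer k ≥ 2, and any two orientations of the chords of d, the sum of the signs of the 2k-cycles in the directed intersection graph induced by the first orientation equals the corresponding sum for the second orientation; hence R_k(d) is well defined, independently of the chosen orientation of the chords. -/

import Mathlib

open Finset
open scoped Classical

/-- The cyclic successor of an element of `Fin m`. -/
def cyclicSucc {m : ℕ} (a : Fin m) : Fin m :=
  ⟨((a : ℕ) + 1) % m, Nat.mod_lt _ a.pos⟩

/-- The cyclic predecessor of an element of `Fin m`. -/
def cyclicPred {m : ℕ} (a : Fin m) : Fin m :=
  ⟨((a : ℕ) + (m - 1)) % m, Nat.mod_lt _ a.pos⟩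

/-- `f : Fin l → V` traces an `l`-cycle of `G`: it is injective and cyclically
consecutive vertices are adjacent. -/
def IsCycleMap {V : Type} (G : SimpleGraph V) (l : ℕ) (f : Fin l → V) : Prop :=
  Function.Injective f ∧ ∀ i : Fin l, G.Adj (f i) (f (cyclicSucc i))

/-- The number `E_l(G)` of `l`-cycles of `G`, counted up to rotation and reflection
(each such cycle is traced by exactly `2 * l` maps `Fin l → V`). -/
noncomputable def cycleCount {V : Type} [Fintype V] (G : SimpleGraph V) (l : ℕ) : ℕ :=
  (Finset.univ.filter (fun f : Fin l → V => IsCycleMap G l f)).card / (2 * l)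

/-- `o` is an orientation of `G`: every edge gets exactly one direction. -/
def IsOrientation {V : Type} (G : SimpleGraph V) (o : V → V → Prop) : Prop :=
  ∀ ⦃x y : V⦄, G.Adj x y → (o x y ↔ ¬ o y x)

/-- The sign of a cycle map with respect to a direction relation `o`:
`+1` iff the number of edges agreeing with the traversal is even. -/
noncomputable def cycleSign {V : Type} {l : ℕ} (o : V → V → Prop) (f : Fin l → V) : ℤ :=
  (-1) ^ (Finset.univ.filter (fun i : Fin l => o (f i) (f (cyclicSucc i)))).card

/-- The sum of signs of all `l`-cycles of `G` (counted up to rotation and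
reflection) with respect to the direction relation `o`. -/
noncomputable def signedCycleSum {V : Type} [Fintype V] (G : SimpleGraph V)
    (o : V → V → Prop) (l : ℕ) : ℤ :=
  (∑ f ∈ Finset.univ.filter (fun f : Fin l → V => IsCycleMap G l f),
    cycleSign o f) / (2 * (l : ℤ))

/-- The graph `Γ'_AB`: toggle the adjacency between the vertices `A` and `B`. -/
def toggleEdge {V : Type} (G : SimpleGraph V) (A B : V) : SimpleGraph V where
  Adj x y := x ≠ y ∧ (G.Adj x y ↔ ¬((x = A ∧ y = B) ∨ (x = B ∧ y = A)))
  symm := ⟨by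
    intro x y h
    obtain ⟨h1, h2⟩ := h
    refine ⟨h1.symm, ?_⟩
    rw [G.adj_comm]
    tauto⟩
  loopless := ⟨fun x h => h.1 rfl⟩

/-- The graph `Γ̃_AB`: toggle the adjacency between `A` and every vertex
`C ∉ {A, B}` adjacent to `B` in `Γ`. -/
def tildeGraph {V : Type} (G : SimpleGraph V) (A B : V) : SimpleGraph V where
  Adj x y := x ≠ y ∧
    (G.Adj x y ↔ ¬((x = A ∧ y ≠ B ∧ G.Adj y B) ∨ (y = A ∧ x ≠ B ∧ G.Adj x B)))
  symm := ⟨by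
    intro x y h
    obtain ⟨h1, h2⟩ := h
    refine ⟨h1.symm, ?_⟩
    rw [G.adj_comm]
    tauto⟩
  loopless := ⟨fun x h => h.1 rfl⟩

/-- A chord diagram of order `n`: a partition of the `2 * n` cyclically ordered
points `0, 1, …, 2n - 1` into `n` two-element blocks (chords), here recorded by
the function assigning to each point its chord. -/
structure ChordDiagram (n : ℕ) where
  chord : Fin (2 * n) → Fin n
  fiber_two : ∀ i : Fin n, (Finset.univ.filter (fun x => chord x = i)).card = 2

namespace ChordDiagram

variable {n : ℕ}

/-- The pair of endpoints of the chord `i`. -/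
def endpoints (d : ChordDiagram n) (i : Fin n) : Finset (Fin (2 * n)) :=
  Finset.univ.filter (fun x => d.chord x = i)

lemma endpoints_nonempty (d : ChordDiagram n) (i : Fin n) : (d.endpoints i).Nonempty := by
  rw [← Finset.card_pos, endpoints, d.fiber_two]
  norm_num

/-- The smaller endpoint of the chord `i`. -/
def lo (d : ChordDiagram n) (i : Fin n) : Fin (2 * n) :=
  (d.endpoints i).min' (d.endpoints_nonempty i)

/-- The larger endpoint of the chord `i`. -/
def hi (d : ChordDiagram n) (i : Fin n) : Fin (2 * n) :=
  (d.endpoints i).max' (d.endpoints_nonempty i)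

/-- Chords `i` and `j` cross: exactly one endpoint of `j` lies strictly between
the two endpoints of `i`. -/
def Crosses (d : ChordDiagram n) (i j : Fin n) : Prop :=
  Xor' (d.lo i < d.lo j ∧ d.lo j < d.hi i) (d.lo i < d.hi j ∧ d.hi j < d.hi i)

/-- The intersection graph `γ(d)` of the chord diagram `d`. -/
def interGraph (d : ChordDiagram n) : SimpleGraph (Fin n) where
  Adj i j := i ≠ j ∧ (d.Crosses i j ∨ d.Crosses j i)
  symm := ⟨fun i j h => ⟨h.1.symm, h.2.symm⟩⟩
  loopless := ⟨fun i h => h.1 rfl⟩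

lemma chord_lo (d : ChordDiagram n) (i : Fin n) : d.chord (d.lo i) = i := by
  have h := (d.endpoints i).min'_mem (d.endpoints_nonempty i)
  exact (Finset.mem_filter.mp h).2

/-- An orientation of a chord diagram: a choice of a beginning point for each
chord (the other endpoint being its end). -/
def Orientation (d : ChordDiagram n) : Type :=
  { b : Fin n → Fin (2 * n) // ∀ i, d.chord (b i) = i }

/-- The end of the chord `i`, i.e. its endpoint other than the beginning. -/
def endOf (d : ChordDiagram n) (o : d.Orientation) (i : Fin n) : Fin (2 * n) :=
  if o.1 i = d.lo i then d.hi i else d.lo i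

/-- The point `z` lies on the arc going in the positive direction from `a` to `b`. -/
def InArc {m : ℕ} (a b z : Fin m) : Prop :=
  if a < b then a < z ∧ z < b else a < z ∨ z < b

/-- The direction induced by an orientation of the chords on the edges of the
intersection graph: the edge between `i` and `j` is directed from `i` to `j`
iff the beginning of `j` lies on the arc going in the positive direction from
the beginning of `i` to the end of `i`. -/
def dir (d : ChordDiagram n) (o : d.Orientation) (i j : Fin n) : Prop :=
  InArc (o.1 i) (d.endOf o i) (o.1 j)

/-- The canonical orientation: every chord begins at its smaller endpoint. -/
def canonical (d : ChordDiagram n) : d.Orientation :=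
  ⟨d.lo, d.chord_lo⟩

end ChordDiagram

/-- The weight system `R_k`: the sum of the signs of the `2k`-cycles of the
directed intersection graph (for the canonical orientation of the chords). -/
noncomputable def Rk (k : ℕ) {n : ℕ} (d : ChordDiagram n) : ℤ :=
  signedCycleSum d.interGraph (d.dir d.canonical) (2 * k)

/-- When the point at position `p` is moved to position `q` (keeping the relative
order of all the other points), `moveFun p q r` is the old position of the point
occupying the position `r` after the move. -/
def moveFun {m : ℕ} (p q : Fin m) (r : Fin m) : Fin m :=
  if r = q then p
  else if h : (p : ℕ) ≤ (r : ℕ) ∧ (r : ℕ) < (q : ℕ) then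
    ⟨(r : ℕ) + 1, by have := q.isLt; omega⟩
  else if h' : (q : ℕ) < (r : ℕ) ∧ (r : ℕ) ≤ (p : ℕ) then
    ⟨(r : ℕ) - 1, by have := r.isLt; omega⟩
  else r

/-- The invariant `w_C`: `1` if the adjacency matrix of the graph over `ZMod 2`
is nondegenerate, `0` otherwise. -/
noncomputable def wC {V : Type} [Fintype V] (G : SimpleGraph V) : ℤ :=
  if (G.adjMatrix (ZMod 2)).det ≠ 0 then 1 else 0

/-- All set partitions of `Fin n` into nonempty blocks. -/
noncomputable def finPartitions (n : ℕ) : Finset (Finset (Finset (Fin n))) :=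
  Finset.univ.filter (fun P =>
    (∀ s ∈ P, s.Nonempty) ∧ ∀ x : Fin n, ∃! s, s ∈ P ∧ x ∈ s)

/-- A `4`-invariant of finite simple graphs: an integer-valued, isomorphism
invariant function satisfying the `4`-term relation for graphs. -/
structure FourInvariant where
  val : ∀ n : ℕ, SimpleGraph (Fin n) → ℤ
  iso_invariant : ∀ {n m : ℕ} (G : SimpleGraph (Fin n)) (H : SimpleGraph (Fin m)),
    Nonempty (G ≃g H) → val n G = val m H
  four_term : ∀ (n : ℕ) (G : SimpleGraph (Fin n)) (A B : Fin n), A ≠ B →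
    val n G - val n (toggleEdge G A B) =
      val n (tildeGraph G A B) - val n (toggleEdge (tildeGraph G A B) A B)

/-- The `5`-wheel: a `5`-cycle on the vertices `0, …, 4` together with the hub `5`
adjacent to all five cycle vertices. -/
def wheel5 : SimpleGraph (Fin 6) :=
  SimpleGraph.fromRel (fun x y =>
    ((x : ℕ) = 5 ∧ (y : ℕ) < 5) ∨
    ((x : ℕ) < 5 ∧ (y : ℕ) < 5 ∧ (y : ℕ) = ((x : ℕ) + 1) % 5))

/-- The triangular prism: two triangles `{0, 1, 2}` and `{3, 4, 5}` joined by the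
perfect matching `i — i + 3`. -/
def prism : SimpleGraph (Fin 6) :=
  SimpleGraph.fromRel (fun x y =>
    ((x : ℕ) < 3 ∧ (y : ℕ) < 3 ∧ x ≠ y) ∨
    (3 ≤ (x : ℕ) ∧ 3 ≤ (y : ℕ) ∧ x ≠ y) ∨
    ((y : ℕ) = (x : ℕ) + 3))

/-!
Reversing a chord `x` reverses every edge of `γ(d)` at `x`: for a chord `y` crossing `x`, the two
endpoints of either chord lie on opposite sides of the other, so moving the beginning of `x` to
its end both swaps the arc of `x` and moves the beginning of `x` to the other side of `y`. Hence
every orientation is the canonical one switched at a set of chords, and switching at a vertex set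
reverses an even number of edges on every cycle, since a cycle passes between the set and its
complement an even number of times.
-/

lemma cyclicSucc_injective {m : ℕ} : Function.Injective (cyclicSucc : Fin m → Fin m) :=
  fun a b h => Fin.ext <|
    (Nat.ModEq.add_right_cancel' 1 (congrArg Fin.val h)).eq_of_lt_of_lt a.isLt b.isLt

lemma cycleSign_eq_prod {V : Type} {l : ℕ} (o : V → V → Prop) (f : Fin l → V) :
    cycleSign o f = ∏ i, if o (f i) (f (cyclicSucc i)) then -1 else 1 := by
  rw [cycleSign, prod_ite, prod_const_one, mul_one, prod_const]

lemma ite_iff_iff_neg_one (P Q R : Prop) :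
    (if (P ↔ (Q ↔ R)) then (-1 : ℤ) else 1) =
      (if P then -1 else 1) * ((if Q then -1 else 1) * (if R then -1 else 1)) := by
  by_cases P <;> by_cases Q <;> by_cases R <;> simp_all

/-- The hypothesis says that `o'` is `o` switched at `s`: reversed exactly on the edges of the
cycle joining a vertex of `s` to a vertex outside `s`. -/
lemma cycleSign_eq_of_switch {V : Type} {l : ℕ} {o o' : V → V → Prop} (s : V → Prop)
    (f : Fin l → V)
    (h : ∀ i, o' (f i) (f (cyclicSucc i)) ↔
      (o (f i) (f (cyclicSucc i)) ↔ (s (f i) ↔ s (f (cyclicSucc i))))) :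
    cycleSign o' f = cycleSign o f := by
  set ε : Fin l → ℤ := fun i => if s (f i) then -1 else 1
  have hsucc : ∏ i, ε (cyclicSucc i) = ∏ i, ε i :=
    cyclicSucc_injective.bijective_of_finite.prod_comp ε
  calc cycleSign o' f
      = ∏ i, (if o (f i) (f (cyclicSucc i)) then -1 else 1) * (ε i * ε (cyclicSucc i)) := by
        simp only [cycleSign_eq_prod, h, ite_iff_iff_neg_one, ε]
    _ = cycleSign o f * ∏ i, ε i ^ 2 := by
        rw [prod_mul_distrib, prod_mul_distrib, hsucc, ← prod_mul_distrib, cycleSign_eq_prod]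
        simp only [sq]
    _ = cycleSign o f := by
        simp [ε, apply_ite (· ^ 2)]

lemma signedCycleSum_eq_of_switch {V : Type} [Fintype V] (G : SimpleGraph V)
    {o o' : V → V → Prop} (s : V → Prop)
    (h : ∀ ⦃x y⦄, G.Adj x y → (o' x y ↔ (o x y ↔ (s x ↔ s y)))) (l : ℕ) :
    signedCycleSum G o' l = signedCycleSum G o l := by
  unfold signedCycleSum
  congr 1
  refine sum_congr rfl fun f hf => cycleSign_eq_of_switch s f fun i => h ?_
  exact (mem_filter.mp hf).2.2 i

namespace ChordDiagram

variable {n : ℕ} (d : ChordDiagram n)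

lemma chord_hi (i : Fin n) : d.chord (d.hi i) = i :=
  (mem_filter.mp ((d.endpoints i).max'_mem _)).2

lemma lo_lt_hi (i : Fin n) : d.lo i < d.hi i :=
  min'_lt_max'_of_card _ (by rw [endpoints, d.fiber_two]; norm_num)

lemma endpoints_eq (i : Fin n) : d.endpoints i = {d.lo i, d.hi i} := by
  symm
  refine eq_of_subset_of_card_le ?_ ?_
  · simp only [insert_subset_iff, singleton_subset_iff]
    exact ⟨min'_mem _ _, max'_mem _ _⟩
  · rw [card_pair (d.lo_lt_hi i).ne, endpoints, d.fiber_two]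

lemma eq_lo_or_eq_hi {i : Fin n} {x : Fin (2 * n)} (hx : d.chord x = i) :
    x = d.lo i ∨ x = d.hi i := by
  have hmem : x ∈ d.endpoints i := mem_filter.mpr ⟨mem_univ x, hx⟩
  simpa [endpoints_eq] using hmem

lemma interlaced_of_adj {x y : Fin n} (h : d.interGraph.Adj x y) :
    (d.lo x < d.lo y ∧ d.lo y < d.hi x ∧ d.hi x < d.hi y) ∨
      (d.lo y < d.lo x ∧ d.lo x < d.hi y ∧ d.hi y < d.hi x) := by
  obtain ⟨hne, hcross⟩ := h
  have hx := d.lo_lt_hi x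
  have hy := d.lo_lt_hi y
  have h1 : d.lo x ≠ d.lo y := fun e => hne (by rw [← d.chord_lo x, e, d.chord_lo])
  have h2 : d.lo x ≠ d.hi y := fun e => hne (by rw [← d.chord_lo x, e, d.chord_hi])
  have h3 : d.hi x ≠ d.lo y := fun e => hne (by rw [← d.chord_hi x, e, d.chord_lo])
  have h4 : d.hi x ≠ d.hi y := fun e => hne (by rw [← d.chord_hi x, e, d.chord_hi])
  rcases hcross with (hc | hc) | (hc | hc) <;>
    simp only [Fin.lt_def, ne_eq, Fin.ext_iff] at hc hx hy h1 h2 h3 h4 ⊢ <;>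
    omega

lemma dir_iff_dir_canonical (o : d.Orientation) {x y : Fin n} (h : d.interGraph.Adj x y) :
    d.dir o x y ↔ (d.dir d.canonical x y ↔ (o.1 x = d.lo x ↔ o.1 y = d.lo y)) := by
  have hcross := d.interlaced_of_adj h
  have hx := d.lo_lt_hi x
  have hy := d.lo_lt_hi y
  rcases d.eq_lo_or_eq_hi (o.2 x) with hox | hox <;>
    rcases d.eq_lo_or_eq_hi (o.2 y) with hoy | hoy <;>
    simp only [dir, endOf, canonical, InArc, hox, hoy, hx, hx.ne', hy.ne', hx.not_gt, if_true,
      if_false, iff_true, iff_false, not_true] <;>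
    simp only [Fin.lt_def, iff_iff_implies_and_implies] at hx hy hcross ⊢ <;>
    omega

lemma signedCycleSum_dir_eq_canonical (o : d.Orientation) (l : ℕ) :
    signedCycleSum d.interGraph (d.dir o) l =
      signedCycleSum d.interGraph (d.dir d.canonical) l :=
  signedCycleSum_eq_of_switch _ (fun i => o.1 i = d.lo i)
    (fun _ _ h => d.dir_iff_dir_canonical o h) l

end ChordDiagram

theorem signedCycleSum_independent_of_orientation_general {n : ℕ} (d : ChordDiagram n)
    (k : ℕ) (o1 o2 : d.Orientation) :
    signedCycleSum d.interGraph (d.dir o1) (2 * k) =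
      signedCycleSum d.interGraph (d.dir o2) (2 * k) := by
  rw [d.signedCycleSum_dir_eq_canonical o1, d.signedCycleSum_dir_eq_canonical o2]

theorem signedCycleSum_independent_of_orientation {n : ℕ} (d : ChordDiagram n)
    (k : ℕ) (hk : 2 ≤ k) (o1 o2 : d.Orientation) :
    signedCycleSum d.interGraph (d.dir o1) (2 * k) =
      signedCycleSum d.interGraph (d.dir o2) (2 * k) :=
  signedCycleSum_independent_of_orientation_general d k o1 o2
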